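/- Let Ψ : D → ℝ³ parametrize a surface with I = du² + 2 cos φ du dv + dv² (φ ∈ (0,π)) and II = L du² + N dv², with K ≠ 0 everywhere. Then for each fixed v, the parametric curve u ↦ Ψ(u,v) has curvature k(u) = (L² + φ_u²)^{1/2} > 0 and torsion τ(u) = (L φ_uu − (L cos φ / sin φ)(L² + φ_u²) − L_u φ_u)/(L² + φ_u²). -/

import Mathlib

open Matrix Real

/-- Partial derivative with respect to the first variable. -/
noncomputable def pu {V : Type*} [NormedAddCommGroup V] [NormedSpace ℝ V]
    (f : ℝ → ℝ → V) (u v : ℝ) : V := deriv (fun x => f x v) u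

/-- Partial derivative with respect to the second variable. -/
noncomputable def pv {V : Type*} [NormedAddCommGroup V] [NormedSpace ℝ V]
    (f : ℝ → ℝ → V) (u v : ℝ) : V := deriv (fun y => f u y) v

section Aux

variable {V : Type*} [NormedAddCommGroup V] [NormedSpace ℝ V]

lemma pu_eq_fderiv (f : ℝ → ℝ → V) (hf : ContDiff ℝ (⊤ : ℕ∞) fun p : ℝ × ℝ => f p.1 p.2) (u v : ℝ) :
    pu f u v = fderiv ℝ (fun p : ℝ × ℝ => f p.1 p.2) (u, v) (1, 0) := by
  have h1 : HasFDerivAt (fun p : ℝ × ℝ => f p.1 p.2)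
      (fderiv ℝ (fun p : ℝ × ℝ => f p.1 p.2) (u, v)) (u, v) :=
    (hf.differentiable (by simp) (u, v)).hasFDerivAt
  have h2 : HasDerivAt (fun x : ℝ => ((x : ℝ), v)) (1, 0) u :=
    (hasDerivAt_id u).prodMk (hasDerivAt_const u v)
  simpa [pu, Function.comp_def] using (h1.comp_hasDerivAt u h2).deriv

lemma pv_eq_fderiv (f : ℝ → ℝ → V) (hf : ContDiff ℝ (⊤ : ℕ∞) fun p : ℝ × ℝ => f p.1 p.2) (u v : ℝ) :
    pv f u v = fderiv ℝ (fun p : ℝ × ℝ => f p.1 p.2) (u, v) (0, 1) := by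
  have h1 : HasFDerivAt (fun p : ℝ × ℝ => f p.1 p.2)
      (fderiv ℝ (fun p : ℝ × ℝ => f p.1 p.2) (u, v)) (u, v) :=
    (hf.differentiable (by simp) (u, v)).hasFDerivAt
  have h2 : HasDerivAt (fun y : ℝ => ((u : ℝ), y)) (0, 1) v :=
    (hasDerivAt_const v u).prodMk (hasDerivAt_id v)
  simpa [pv, Function.comp_def] using (h1.comp_hasDerivAt v h2).deriv

lemma hasDerivAt_pu (f : ℝ → ℝ → V) (hf : ContDiff ℝ (⊤ : ℕ∞) fun p : ℝ × ℝ => f p.1 p.2)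
    (u v : ℝ) : HasDerivAt (fun x => f x v) (pu f u v) u := by
  have h1 : HasFDerivAt (fun p : ℝ × ℝ => f p.1 p.2)
      (fderiv ℝ (fun p : ℝ × ℝ => f p.1 p.2) (u, v)) (u, v) :=
    (hf.differentiable (by simp) (u, v)).hasFDerivAt
  have h2 : HasDerivAt (fun x : ℝ => ((x : ℝ), v)) (1, 0) u :=
    (hasDerivAt_id u).prodMk (hasDerivAt_const u v)
  have h3 := h1.comp_hasDerivAt u h2
  rw [pu_eq_fderiv f hf u v]
  exact h3

lemma hasDerivAt_pv (f : ℝ → ℝ → V) (hf : ContDiff ℝ (⊤ : ℕ∞) fun p : ℝ × ℝ => f p.1 p.2)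
    (u v : ℝ) : HasDerivAt (fun y => f u y) (pv f u v) v := by
  have h1 : HasFDerivAt (fun p : ℝ × ℝ => f p.1 p.2)
      (fderiv ℝ (fun p : ℝ × ℝ => f p.1 p.2) (u, v)) (u, v) :=
    (hf.differentiable (by simp) (u, v)).hasFDerivAt
  have h2 : HasDerivAt (fun y : ℝ => ((u : ℝ), y)) (0, 1) v :=
    (hasDerivAt_const v u).prodMk (hasDerivAt_id v)
  have h3 := h1.comp_hasDerivAt v h2
  rw [pv_eq_fderiv f hf u v]
  exact h3

lemma contDiff_pu (f : ℝ → ℝ → V) (hf : ContDiff ℝ (⊤ : ℕ∞) fun p : ℝ × ℝ => f p.1 p.2) :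
    ContDiff ℝ (⊤ : ℕ∞) fun p : ℝ × ℝ => pu f p.1 p.2 := by
  have : (fun p : ℝ × ℝ => pu f p.1 p.2)
      = fun p : ℝ × ℝ => fderiv ℝ (fun q : ℝ × ℝ => f q.1 q.2) p (1, 0) := by
    funext p
    exact pu_eq_fderiv f hf p.1 p.2
  rw [this]
  exact (hf.fderiv_right (by simp)).clm_apply contDiff_const

lemma contDiff_pv (f : ℝ → ℝ → V) (hf : ContDiff ℝ (⊤ : ℕ∞) fun p : ℝ × ℝ => f p.1 p.2) :
    ContDiff ℝ (⊤ : ℕ∞) fun p : ℝ × ℝ => pv f p.1 p.2 := by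
  have : (fun p : ℝ × ℝ => pv f p.1 p.2)
      = fun p : ℝ × ℝ => fderiv ℝ (fun q : ℝ × ℝ => f q.1 q.2) p (0, 1) := by
    funext p
    exact pv_eq_fderiv f hf p.1 p.2
  rw [this]
  exact (hf.fderiv_right (by simp)).clm_apply contDiff_const

lemma pu_pv_symm (f : ℝ → ℝ → V) (hf : ContDiff ℝ (⊤ : ℕ∞) fun p : ℝ × ℝ => f p.1 p.2) (u v : ℝ) :
    pu (pv f) u v = pv (pu f) u v := by
  set F := fun p : ℝ × ℝ => f p.1 p.2 with hF
  have hdF : ContDiff ℝ (⊤ : ℕ∞) (fderiv ℝ F) := hf.fderiv_right (by simp)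
  have hsymm : IsSymmSndFDerivAt ℝ F (u, v) :=
    hf.contDiffAt.isSymmSndFDerivAt (by rw [minSmoothness_of_isRCLikeNormedField]; exact WithTop.coe_le_coe.mpr (le_top : (2:ℕ∞) ≤ ⊤))
  have key : ∀ w z : ℝ × ℝ,
      fderiv ℝ (fun p : ℝ × ℝ => fderiv ℝ F p w) (u, v) z
        = fderiv ℝ (fderiv ℝ F) (u, v) z w := by
    intro w z
    rw [fderiv_clm_apply (hdF.differentiable (by simp)).differentiableAt
      (differentiableAt_const w)]
    simp
  rw [pu_eq_fderiv (pv f) (contDiff_pv f hf) u v, pv_eq_fderiv (pu f) (contDiff_pu f hf) u v]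
  have h2 : (fun p : ℝ × ℝ => pv f p.1 p.2) = fun p : ℝ × ℝ => fderiv ℝ F p (0, 1) := by
    funext p; exact pv_eq_fderiv f hf p.1 p.2
  have h3 : (fun p : ℝ × ℝ => pu f p.1 p.2) = fun p : ℝ × ℝ => fderiv ℝ F p (1, 0) := by
    funext p; exact pu_eq_fderiv f hf p.1 p.2
  rw [h2, h3, key, key]
  exact hsymm _ _

end Aux

section Vec

lemma HasDerivAt.dot3 {f g : ℝ → Fin 3 → ℝ} {f' g' : Fin 3 → ℝ} {t : ℝ}
    (hf : HasDerivAt f f' t) (hg : HasDerivAt g g' t) :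
    HasDerivAt (fun s => f s ⬝ᵥ g s) (f' ⬝ᵥ g t + f t ⬝ᵥ g') t := by
  have hfi := hasDerivAt_pi.mp hf
  have hgi := hasDerivAt_pi.mp hg
  have h : HasDerivAt (fun s => ∑ i : Fin 3, f s i * g s i)
      (∑ i : Fin 3, (f' i * g t i + f t i * g' i)) t :=
    HasDerivAt.fun_sum fun i _ => (hfi i).mul (hgi i)
  simpa [dotProduct, Finset.sum_add_distrib] using h

lemma HasDerivAt.cross3 {f g : ℝ → Fin 3 → ℝ} {f' g' : Fin 3 → ℝ} {t : ℝ}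
    (hf : HasDerivAt f f' t) (hg : HasDerivAt g g' t) :
    HasDerivAt (fun s => crossProduct (f s) (g s))
      (crossProduct f' (g t) + crossProduct (f t) g') t := by
  have hfi := hasDerivAt_pi.mp hf
  have hgi := hasDerivAt_pi.mp hg
  rw [hasDerivAt_pi]
  intro i
  fin_cases i
  · have h := ((hfi 1).mul (hgi 2)).sub ((hfi 2).mul (hgi 1))
    simp only [cross_apply, Pi.add_apply, Matrix.cons_val_zero]
    convert h using 1
    · rfl
    · simp [Matrix.cons_val]
      ring
  · have h := ((hfi 2).mul (hgi 0)).sub ((hfi 0).mul (hgi 2))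
    simp only [cross_apply, Pi.add_apply, Matrix.cons_val_one, Matrix.head_cons]
    convert h using 1
    · rfl
    · simp [Matrix.cons_val]
      ring
  · have h := ((hfi 0).mul (hgi 1)).sub ((hfi 1).mul (hgi 0))
    simp only [cross_apply, Pi.add_apply, Matrix.cons_val_two, Matrix.tail_cons,
      Matrix.head_cons]
    convert h using 1
    · rfl
    · simp [Matrix.cons_val]
      ring

lemma cross_cross_eq (a b c : Fin 3 → ℝ) :
    crossProduct a (crossProduct b c) = (a ⬝ᵥ c) • b - (a ⬝ᵥ b) • c := by
  funext i
  fin_cases i <;>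
    simp [cross_apply, dotProduct, Fin.sum_univ_three] <;> ring

lemma eq_zero_of_dot3 {a b x : Fin 3 → ℝ}
    (hab : crossProduct a b ⬝ᵥ crossProduct a b ≠ 0)
    (h1 : x ⬝ᵥ a = 0) (h2 : x ⬝ᵥ b = 0) (h3 : x ⬝ᵥ crossProduct a b = 0) : x = 0 := by
  set c := crossProduct a b with hc
  have hxc : crossProduct x c = 0 := by
    rw [hc, cross_cross_eq, h1, h2]; simp
  have hcx : c ⬝ᵥ x = 0 := by rw [dotProduct_comm]; exact h3
  have h5 := cross_cross_eq c x c
  rw [hxc, hcx] at h5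
  simp only [map_zero, zero_smul, sub_zero] at h5
  have h6 : (c ⬝ᵥ c) • x = 0 := h5.symm
  rcases smul_eq_zero.mp h6 with h | h
  · exact absurd h hab
  · exact h

end Vec

theorem stmt_12 (Ψ : ℝ → ℝ → (Fin 3 → ℝ)) (φ L N K : ℝ → ℝ → ℝ)
    (hΨ : ContDiff ℝ (⊤ : ℕ∞) fun p : ℝ × ℝ => Ψ p.1 p.2)
    (hφsm : ContDiff ℝ (⊤ : ℕ∞) fun p : ℝ × ℝ => φ p.1 p.2)
    (hLsm : ContDiff ℝ (⊤ : ℕ∞) fun p : ℝ × ℝ => L p.1 p.2)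
    (hφrange : ∀ u v, φ u v ∈ Set.Ioo 0 π)
    (hE : ∀ u v, pu Ψ u v ⬝ᵥ pu Ψ u v = 1)
    (hF : ∀ u v, pu Ψ u v ⬝ᵥ pv Ψ u v = Real.cos (φ u v))
    (hG : ∀ u v, pv Ψ u v ⬝ᵥ pv Ψ u v = 1)
    (hL : ∀ u v, pu (pu Ψ) u v ⬝ᵥ
      ((Real.sin (φ u v))⁻¹ • crossProduct (pu Ψ u v) (pv Ψ u v)) = L u v)
    (hM : ∀ u v, pv (pu Ψ) u v ⬝ᵥ
      ((Real.sin (φ u v))⁻¹ • crossProduct (pu Ψ u v) (pv Ψ u v)) = 0)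
    (hN : ∀ u v, pv (pv Ψ) u v ⬝ᵥ
      ((Real.sin (φ u v))⁻¹ • crossProduct (pu Ψ u v) (pv Ψ u v)) = N u v)
    (hGauss : ∀ u v, K u v = L u v * N u v / Real.sin (φ u v) ^ 2)
    (hKne : ∀ u v, K u v ≠ 0) :
    ∀ u v,
      Real.sqrt (pu (pu Ψ) u v ⬝ᵥ pu (pu Ψ) u v)
        = Real.sqrt (L u v ^ 2 + (pu φ u v) ^ 2) ∧
      0 < Real.sqrt (L u v ^ 2 + (pu φ u v) ^ 2) ∧
      Matrix.det (Matrix.of ![pu Ψ u v, pu (pu Ψ) u v, pu (pu (pu Ψ)) u v]) /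
          (crossProduct (pu Ψ u v) (pu (pu Ψ) u v) ⬝ᵥ
            crossProduct (pu Ψ u v) (pu (pu Ψ) u v))
        = (L u v * pu (pu φ) u v
            - (L u v * Real.cos (φ u v) / Real.sin (φ u v)) * (L u v ^ 2 + (pu φ u v) ^ 2)
            - pu L u v * pu φ u v) / (L u v ^ 2 + (pu φ u v) ^ 2) := by
  have hs : ∀ u v, 0 < Real.sin (φ u v) := fun u v =>
    Real.sin_pos_of_pos_of_lt_pi (hφrange u v).1 (hφrange u v).2
  have hsne : ∀ u v, Real.sin (φ u v) ≠ 0 := fun u v => (hs u v).ne'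
  have hLne : ∀ u v, L u v ≠ 0 := by
    intro u v h
    exact hKne u v (by rw [hGauss u v, h, zero_mul, zero_div])
  -- smoothness of partials
  have hΨu := contDiff_pu Ψ hΨ
  have hΨv := contDiff_pv Ψ hΨ
  have hΨuu := contDiff_pu _ hΨu
  have hφu := contDiff_pu φ hφsm
  -- symmetry of second partials
  have hsymm : ∀ u v, pu (pv Ψ) u v = pv (pu Ψ) u v := pu_pv_symm Ψ hΨ
  -- basic dot product facts by differentiation
  have hF' : ∀ u v, pv Ψ u v ⬝ᵥ pu Ψ u v = Real.cos (φ u v) := fun u v => by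
    rw [dotProduct_comm]; exact hF u v
  have fA : ∀ u v, pu (pu Ψ) u v ⬝ᵥ pu Ψ u v = 0 := by
    intro u v
    have h1 := (hasDerivAt_pu (pu Ψ) hΨu u v).dot3 (hasDerivAt_pu (pu Ψ) hΨu u v)
    have h2 : (fun x => pu Ψ x v ⬝ᵥ pu Ψ x v) = fun _ => (1:ℝ) := funext fun x => hE x v
    rw [h2] at h1
    have h3 := h1.unique (hasDerivAt_const u 1)
    rw [dotProduct_comm (pu Ψ u v) (pu (pu Ψ) u v)] at h3
    linarith
  have fB : ∀ u v, pv (pu Ψ) u v ⬝ᵥ pu Ψ u v = 0 := by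
    intro u v
    have h1 := (hasDerivAt_pv (pu Ψ) hΨu u v).dot3 (hasDerivAt_pv (pu Ψ) hΨu u v)
    have h2 : (fun y => pu Ψ u y ⬝ᵥ pu Ψ u y) = fun _ => (1:ℝ) := funext fun y => hE u y
    rw [h2] at h1
    have h3 := h1.unique (hasDerivAt_const v 1)
    rw [dotProduct_comm (pu Ψ u v) (pv (pu Ψ) u v)] at h3
    linarith
  have fD : ∀ u v, pv (pu Ψ) u v ⬝ᵥ pv Ψ u v = 0 := by
    intro u v
    have h1 := (hasDerivAt_pu (pv Ψ) hΨv u v).dot3 (hasDerivAt_pu (pv Ψ) hΨv u v)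
    have h2 : (fun x => pv Ψ x v ⬝ᵥ pv Ψ x v) = fun _ => (1:ℝ) := funext fun x => hG x v
    rw [h2] at h1
    have h3 := h1.unique (hasDerivAt_const u 1)
    rw [dotProduct_comm (pv Ψ u v) (pu (pv Ψ) u v), hsymm u v] at h3
    linarith
  have fC : ∀ u v, pu (pu Ψ) u v ⬝ᵥ pv Ψ u v = -(Real.sin (φ u v) * pu φ u v) := by
    intro u v
    have h1 := (hasDerivAt_pu (pu Ψ) hΨu u v).dot3 (hasDerivAt_pu (pv Ψ) hΨv u v)
    have h2 : (fun x => pu Ψ x v ⬝ᵥ pv Ψ x v) = fun x => Real.cos (φ x v) :=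
      funext fun x => hF x v
    rw [h2] at h1
    have h3 := h1.unique (hasDerivAt_pu φ hφsm u v).cos
    rw [dotProduct_comm (pu Ψ u v) (pu (pv Ψ) u v), hsymm u v, fB u v] at h3
    linarith
  -- cross product facts
  have crcr : ∀ u v, crossProduct (pu Ψ u v) (pv Ψ u v) ⬝ᵥ
      crossProduct (pu Ψ u v) (pv Ψ u v) = Real.sin (φ u v) ^ 2 := by
    intro u v
    rw [cross_dot_cross, hE u v, hF u v, hF' u v, hG u v]
    have := Real.sin_sq_add_cos_sq (φ u v)
    nlinarith
  have crE1 : ∀ u v, crossProduct (pu Ψ u v) (pv Ψ u v) ⬝ᵥ pu Ψ u v = 0 := by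
    intro u v
    rw [dotProduct_comm]
    exact dot_self_cross _ _
  have crE2 : ∀ u v, crossProduct (pu Ψ u v) (pv Ψ u v) ⬝ᵥ pv Ψ u v = 0 := by
    intro u v
    rw [dotProduct_comm]
    exact dot_cross_self _ _
  have fM : ∀ u v, pv (pu Ψ) u v ⬝ᵥ crossProduct (pu Ψ u v) (pv Ψ u v) = 0 := by
    intro u v
    have h := hM u v
    rw [dotProduct_smul, smul_eq_mul] at h
    exact (mul_eq_zero.mp h).resolve_left (inv_ne_zero (hsne u v))
  have fL : ∀ u v, pu (pu Ψ) u v ⬝ᵥ crossProduct (pu Ψ u v) (pv Ψ u v)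
      = Real.sin (φ u v) * L u v := by
    intro u v
    have h := hL u v
    rw [dotProduct_smul, smul_eq_mul, inv_mul_eq_div,
      div_eq_iff (hsne u v)] at h
    rw [h, mul_comm]
  have hW0 : ∀ u v, pv (pu Ψ) u v = 0 := by
    intro u v
    refine eq_zero_of_dot3 (a := pu Ψ u v) (b := pv Ψ u v) ?_ (fB u v) (fD u v) (fM u v)
    rw [crcr u v]
    exact pow_ne_zero 2 (hsne u v)
  -- the expansion of Ψ_uu in the moving frame
  have hExp : ∀ u v, pu (pu Ψ) u v
      = (pu φ u v * Real.cos (φ u v) / Real.sin (φ u v)) • pu Ψ u v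
        - (pu φ u v / Real.sin (φ u v)) • pv Ψ u v
        + (L u v / Real.sin (φ u v)) • crossProduct (pu Ψ u v) (pv Ψ u v) := by
    intro u v
    have key : pu (pu Ψ) u v
        - ((pu φ u v * Real.cos (φ u v) / Real.sin (φ u v)) • pu Ψ u v
          - (pu φ u v / Real.sin (φ u v)) • pv Ψ u v
          + (L u v / Real.sin (φ u v)) • crossProduct (pu Ψ u v) (pv Ψ u v)) = 0 := by
      refine eq_zero_of_dot3 (a := pu Ψ u v) (b := pv Ψ u v) ?_ ?_ ?_ ?_
      · rw [crcr u v]; exact pow_ne_zero 2 (hsne u v)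
      · simp only [sub_dotProduct, add_dotProduct, smul_dotProduct,
          smul_eq_mul, fA u v, hE u v, hF' u v, crE1 u v]
        ring
      · simp only [sub_dotProduct, add_dotProduct, smul_dotProduct,
          smul_eq_mul, fC u v, hF u v, hG u v, crE2 u v]
        have hc := Real.sin_sq_add_cos_sq (φ u v)
        field_simp [hsne u v]
        linear_combination (-(pu φ u v)) * hc
      · simp only [sub_dotProduct, add_dotProduct, smul_dotProduct,
          smul_eq_mul, fL u v, crcr u v]
        rw [dotProduct_comm (pu Ψ u v), dotProduct_comm (pv Ψ u v),
          crE1 u v, crE2 u v]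
        field_simp [hsne u v]
        ring
    exact sub_eq_zero.mp key
  have hX2X2 : ∀ u v, pu (pu Ψ) u v ⬝ᵥ pu (pu Ψ) u v = L u v ^ 2 + pu φ u v ^ 2 := by
    intro u v
    have h := congrArg (fun x => x ⬝ᵥ pu (pu Ψ) u v) (hExp u v)
    simp only [sub_dotProduct, add_dotProduct, smul_dotProduct,
      smul_eq_mul] at h
    rw [dotProduct_comm (pu Ψ u v) (pu (pu Ψ) u v),
      dotProduct_comm (pv Ψ u v) (pu (pu Ψ) u v),
      dotProduct_comm (crossProduct (pu Ψ u v) (pv Ψ u v)) (pu (pu Ψ) u v),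
      fA u v, fC u v, fL u v] at h
    rw [h]
    field_simp [hsne u v]
    ring
  have fF : ∀ u v, pu (pu (pu Ψ)) u v ⬝ᵥ pu Ψ u v = -(L u v ^ 2 + pu φ u v ^ 2) := by
    intro u v
    have h1 := (hasDerivAt_pu (pu (pu Ψ)) hΨuu u v).dot3 (hasDerivAt_pu (pu Ψ) hΨu u v)
    have h2 : (fun x => pu (pu Ψ) x v ⬝ᵥ pu Ψ x v) = fun _ => (0:ℝ) := funext fun x => fA x v
    rw [h2] at h1
    have h3 := h1.unique (hasDerivAt_const u 0)
    rw [dotProduct_comm (pu (pu Ψ) u v) (pu (pu Ψ) u v), hX2X2 u v] at h3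
    linarith
  have fG2 : ∀ u v, pu (pu (pu Ψ)) u v ⬝ᵥ pv Ψ u v
      = -(Real.cos (φ u v) * pu φ u v ^ 2) - Real.sin (φ u v) * pu (pu φ) u v := by
    intro u v
    have h1 := (hasDerivAt_pu (pu (pu Ψ)) hΨuu u v).dot3 (hasDerivAt_pu (pv Ψ) hΨv u v)
    have h2 : (fun x => pu (pu Ψ) x v ⬝ᵥ pv Ψ x v)
        = fun x => -(Real.sin (φ x v) * pu φ x v) := funext fun x => fC x v
    rw [h2] at h1
    have hr := ((hasDerivAt_pu φ hφsm u v).sin.mul (hasDerivAt_pu (pu φ) hφu u v)).neg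
    have h3 := h1.unique hr
    rw [hsymm u v, hW0 u v, dotProduct_zero] at h3
    linear_combination h3
  have fH : ∀ u v, pu (pu (pu Ψ)) u v ⬝ᵥ crossProduct (pu Ψ u v) (pv Ψ u v)
      = Real.cos (φ u v) * pu φ u v * L u v + Real.sin (φ u v) * pu L u v := by
    intro u v
    have hcr := (hasDerivAt_pu (pu Ψ) hΨu u v).cross3 (hasDerivAt_pu (pv Ψ) hΨv u v)
    have h1 := (hasDerivAt_pu (pu (pu Ψ)) hΨuu u v).dot3 hcr
    have h2 : (fun x => pu (pu Ψ) x v ⬝ᵥ crossProduct (pu Ψ x v) (pv Ψ x v))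
        = fun x => Real.sin (φ x v) * L x v := funext fun x => fL x v
    rw [h2] at h1
    have hr := (hasDerivAt_pu φ hφsm u v).sin.mul (hasDerivAt_pu L hLsm u v)
    have h3 := h1.unique hr
    rw [hsymm u v, hW0 u v, map_zero, add_zero, dot_self_cross] at h3
    linear_combination h3
  intro u v
  have hpos : 0 < L u v ^ 2 + pu φ u v ^ 2 := by
    have h1 := sq_pos_of_ne_zero (hLne u v)
    nlinarith [sq_nonneg (pu φ u v)]
  refine ⟨by rw [hX2X2 u v], Real.sqrt_pos.mpr hpos, ?_⟩
  have hdenom : crossProduct (pu Ψ u v) (pu (pu Ψ) u v) ⬝ᵥ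
      crossProduct (pu Ψ u v) (pu (pu Ψ) u v) = L u v ^ 2 + pu φ u v ^ 2 := by
    rw [cross_dot_cross, hE u v, hX2X2 u v,
      dotProduct_comm (pu Ψ u v) (pu (pu Ψ) u v), fA u v]
    ring
  have hdet : Matrix.det (Matrix.of ![pu Ψ u v, pu (pu Ψ) u v, pu (pu (pu Ψ)) u v])
      = pu (pu (pu Ψ)) u v ⬝ᵥ crossProduct (pu Ψ u v) (pu (pu Ψ) u v) := by
    have e0 : pu Ψ u v ⬝ᵥ crossProduct (pu (pu Ψ) u v) (pu (pu (pu Ψ)) u v)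
        = Matrix.det (Matrix.of ![pu Ψ u v, pu (pu Ψ) u v, pu (pu (pu Ψ)) u v]) :=
      triple_product_eq_det _ _ _
    rw [← e0, triple_product_permutation, triple_product_permutation]
  have hcross : crossProduct (pu Ψ u v) (pu (pu Ψ) u v)
      = (-(pu φ u v / Real.sin (φ u v))) • crossProduct (pu Ψ u v) (pv Ψ u v)
        + (L u v / Real.sin (φ u v)) • (Real.cos (φ u v) • pu Ψ u v - pv Ψ u v) := by
    conv_lhs => rw [hExp u v]
    rw [LinearMap.map_add, LinearMap.map_sub, LinearMap.map_smul, LinearMap.map_smul,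
      LinearMap.map_smul, cross_self, smul_zero, zero_sub,
      cross_cross_eq, hF u v, hE u v, one_smul]
    module
  rw [hdet, hdenom, hcross, dotProduct_add, dotProduct_smul,
    dotProduct_smul, dotProduct_sub, dotProduct_smul,
    smul_eq_mul, smul_eq_mul, smul_eq_mul, fH u v, fF u v, fG2 u v]
  rw [div_eq_div_iff hpos.ne' hpos.ne']
  field_simp [hsne u v]
  ring
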